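/- If an agent's urgency is zero, then every message m ∈ {0,…,k} yields the same expected immediate cost (namely zero), and among all messages, m = 0 maximizes the expected next-period karma; hence if θ is nonincreasing in karma, m = 0 is an optimal message. -/
import Mathlib


/-- If the agent's urgency is zero, every message yields zero expected
immediate cost, and if `θ` is nonincreasing in karma then bidding `m = 0` is
an optimal message: `ρ(0,k,0) ≤ ρ(0,k,m)` for all `m ≤ k`. -/
theorem stmt_11 (kmax k : ℕ) (hk : k ≤ kmax) (α : ℝ) (hα : 0 ≤ α)
    (u : ℝ) (hu : u = 0)
    (q : ℕ × ℕ → ℝ) (hq0 : ∀ p, 0 ≤ q p)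
    (hq1 : ∑ p ∈ Finset.range (kmax + 1) ×ˢ Finset.range (kmax + 1), q p = 1)
    (hsupp : ∀ kj mj : ℕ, q (kj, mj) ≠ 0 → mj ≤ kj ∧ kj ≤ kmax)
    (θ : ℕ → ℝ) (hθ : ∀ a b : ℕ, a ≤ b → b ≤ kmax → θ b ≤ θ a)
    (Pdel : ℕ → ℝ)
    (hPdel : ∀ m, Pdel m = ∑ p ∈ Finset.range (kmax + 1) ×ˢ Finset.range (kmax + 1),
      q p * (if min m k < min p.2 p.1 then (1 : ℝ)
             else if min m k = min p.2 p.1 then 1 / 2 else 0))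
    (ρ : ℕ → ℝ)
    (hρ : ∀ m, ρ m = u * Pdel m +
      α * ∑ p ∈ Finset.range (kmax + 1) ×ˢ Finset.range (kmax + 1),
        q p * (if min p.2 p.1 < min m k then θ (k - min (min m k) (kmax - p.1))
               else if min m k < min p.2 p.1 then θ (min (k + min p.2 p.1) kmax)
               else (θ (k - min (min m k) (kmax - p.1)) +
                     θ (min (k + min p.2 p.1) kmax)) / 2)) :
    (∀ m : ℕ, u * Pdel m = 0) ∧ (∀ m : ℕ, m ≤ k → ρ 0 ≤ ρ m) := by
  subst hu
  refine ⟨fun m => by ring, fun m hm => ?_⟩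
  rw [hρ, hρ]
  simp only [zero_mul, zero_add]
  apply mul_le_mul_of_nonneg_left _ hα
  apply Finset.sum_le_sum
  intro p _
  apply mul_le_mul_of_nonneg_left _ (hq0 p)
  set c := min p.2 p.1 with hc
  set b := min m k with hb
  have key : ∀ x : ℕ, θ (min (k + c) kmax) ≤ θ (k - x) := fun x =>
    hθ _ _ (by omega) (by omega)
  have keyk : ∀ x : ℕ, θ k ≤ θ (k - x) := fun x =>
    hθ _ _ (by omega) (by omega)
  have h0 : min 0 k = 0 := Nat.zero_min k
  rw [h0]
  have hm0 : min (0 : ℕ) (kmax - p.1) = 0 := Nat.zero_min _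
  rw [hm0, Nat.sub_zero]
  rcases Nat.eq_zero_or_pos c with hc0 | hc0
  · rw [hc0]
    have hL : (if (0:ℕ) < 0 then θ k
        else if 0 < (0:ℕ) then θ (min (k + 0) kmax)
        else (θ k + θ (min (k + 0) kmax)) / 2) = θ k := by
      rw [if_neg (lt_irrefl 0), if_neg (lt_irrefl 0), Nat.add_zero,
        min_eq_left hk]
      ring
    rw [hL]
    by_cases hbpos : 0 < b
    · rw [if_pos hbpos]
      exact keyk _
    · have hb0 : b = 0 := by omega
      rw [hb0, if_neg (lt_irrefl 0), if_neg (lt_irrefl 0), Nat.add_zero,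
        min_eq_left hk, Nat.zero_min, Nat.sub_zero]
      linarith
  · rw [if_neg (by omega : ¬ c < 0), if_pos hc0]
    split_ifs with h1 h2
    · exact key _
    · exact le_refl _
    · linarith [key (min b (kmax - p.1))]
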